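/- arXiv:2208.02293 — 2 statements merged into one kernel-verified Lean document; each statement's English description precedes it below -/
import Mathlib

section
/- Let f : [0,1] → ℝ be càglàd, i.e. left-continuous at every point of (0,1] and possessing right limits at every point of [0,1). If f(0) = 0 and ∫₀¹ f(s)·sⁿ ds = 0 for every natural number n, then f(s) = 0 for every s ∈ [0,1]. -/
open MeasureTheory Filter Set Topology TopologicalSpace Polynomial

/-!
Left-continuity makes `f` the pointwise limit of the step functions `t ↦ f ((⌈(n+1)t⌉ - 1)/(n+1))`,
hence measurable, and one-sided limits at every point make it locally, hence (by compactness)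
globally bounded on `[0,1]`; so `f` is integrable there. Vanishing moments mean `f` annihilates
every polynomial, hence by Weierstrass every continuous function, so `f = 0` almost everywhere.
A point `t ∈ (0,1]` is then a left limit of zeros of `f`, and left-continuity gives `f t = 0`.
-/

theorem tendsto_ceil_sub_one_div_nhdsLT (t : ℝ) :
    Tendsto (fun n : ℕ => ((⌈(n + 1 : ℝ) * t⌉ : ℝ) - 1) / (n + 1)) atTop (𝓝[<] t) := by
  have hpos (n : ℕ) : (0 : ℝ) < n + 1 := by positivity
  have hlt (n : ℕ) : ((⌈(n + 1 : ℝ) * t⌉ : ℝ) - 1) / (n + 1) < t := by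
    rw [div_lt_iff₀ (hpos n)]
    linarith [Int.ceil_lt_add_one ((n + 1 : ℝ) * t)]
  have hge (n : ℕ) : t - 1 / (n + 1) ≤ ((⌈(n + 1 : ℝ) * t⌉ : ℝ) - 1) / (n + 1) := by
    rw [sub_div' (hpos n).ne', div_le_div_iff_of_pos_right (hpos n)]
    linarith [Int.le_ceil ((n + 1 : ℝ) * t)]
  refine tendsto_nhdsWithin_of_tendsto_nhds_of_eventually_within _ ?_ (.of_forall hlt)
  refine tendsto_of_tendsto_of_tendsto_of_le_of_le ?_ tendsto_const_nhds hge fun n => (hlt n).le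
  simpa using tendsto_const_nhds.sub (tendsto_one_div_add_atTop_nhds_zero_nat (𝕜 := ℝ))

theorem aemeasurable_of_ae_tendsto_nhdsLT {β : Type*} [TopologicalSpace β]
    [PseudoMetrizableSpace β] [MeasurableSpace β] [BorelSpace β] {μ : Measure ℝ} {f : ℝ → β}
    (hf : ∀ᵐ t ∂μ, Tendsto f (𝓝[<] t) (𝓝 (f t))) : AEMeasurable f μ := by
  refine aemeasurable_of_tendsto_metrizable_ae' (fun n => ?_)
    (hf.mono fun t ht => ht.comp (tendsto_ceil_sub_one_div_nhdsLT t))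
  -- the approximant factors through the integer `⌈(n + 1) * t⌉`
  exact ((measurable_from_top (f := fun k : ℤ => f ((k - 1) / (n + 1)))).comp
    (Int.measurable_ceil.comp (measurable_const.mul measurable_id))).aemeasurable

theorem IsCompact.bddAbove_image_of_isBoundedUnder {X β : Type*} [TopologicalSpace X]
    [SemilatticeSup β] [Nonempty β] {K : Set X} {g : X → β} (hK : IsCompact K)
    (hg : ∀ x ∈ K, (𝓝[K] x).IsBoundedUnder (· ≤ ·) g) : BddAbove (g '' K) := by
  refine hK.induction_on (p := fun s => BddAbove (g '' s)) (by simp)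
    (fun s t hst ht => ht.mono (image_mono hst))
    (fun s t hs ht => by simpa only [image_union] using hs.union ht) fun x hx => ?_
  obtain ⟨s, hs, hxs⟩ := isBoundedUnder_iff_eventually_bddAbove.1 (hg x hx)
  exact ⟨s, hxs, hs⟩

theorem isBoundedUnder_norm_nhdsWithin_Icc {E : Type*} [SeminormedAddGroup E] {f : ℝ → E}
    {a b t : ℝ} (hl : ∀ t ∈ Ioc a b, ∃ L, Tendsto f (𝓝[<] t) (𝓝 L))
    (hr : ∀ t ∈ Ico a b, ∃ L, Tendsto f (𝓝[>] t) (𝓝 L)) (ht : t ∈ Icc a b) :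
    (𝓝[Icc a b] t).IsBoundedUnder (· ≤ ·) (‖f ·‖) := by
  have hsplit : 𝓝[Icc a b] t ≤ 𝓝[Ico a t] t ⊔ pure t ⊔ 𝓝[Ioc t b] t := by
    rw [← nhdsWithin_singleton, ← nhdsWithin_union, ← nhdsWithin_union]
    refine nhdsWithin_mono _ fun x hx => ?_
    rcases lt_trichotomy x t with h | rfl | h
    · exact .inl (.inl ⟨hx.1, h⟩)
    · exact .inl (.inr rfl)
    · exact .inr ⟨h, hx.2⟩
  have hleft : (𝓝[Ico a t] t).IsBoundedUnder (· ≤ ·) (‖f ·‖) := by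
    rcases lt_or_ge a t with hat | hta
    · obtain ⟨L, hL⟩ := hl t ⟨hat, ht.2⟩
      rw [nhdsWithin_Ico_eq_nhdsLT hat]
      exact hL.norm.isBoundedUnder_le
    · exact isBoundedUnder_of_eventually_le (a := 0) (by simp [Ico_eq_empty_of_le hta])
  have hright : (𝓝[Ioc t b] t).IsBoundedUnder (· ≤ ·) (‖f ·‖) := by
    rcases lt_or_ge t b with htb | hbt
    · obtain ⟨L, hL⟩ := hr t ⟨ht.1, htb⟩
      rw [nhdsWithin_Ioc_eq_nhdsGT htb]
      exact hL.norm.isBoundedUnder_le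
    · exact isBoundedUnder_of_eventually_le (a := 0) (by simp [Ioc_eq_empty_of_le hbt])
  have hpure : (pure t : Filter ℝ).IsBoundedUnder (· ≤ ·) (‖f ·‖) :=
    isBoundedUnder_of_eventually_le (eventually_pure.2 le_rfl)
  refine IsBoundedUnder.mono hsplit ?_
  rw [IsBoundedUnder, Filter.map_sup, Filter.map_sup]
  exact isBounded_sup (isBounded_sup hleft hpure) hright

section Moments

variable {f : ℝ → ℝ} {a b : ℝ}

theorem integral_mul_eval_eq_zero_of_moments (hf : IntegrableOn f (Icc a b))
    (hmom : ∀ n : ℕ, ∫ x in Icc a b, f x * x ^ n = 0) (p : ℝ[X]) :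
    ∫ x in Icc a b, f x * p.eval x = 0 := by
  have hint (n : ℕ) : IntegrableOn (fun x => f x * x ^ n) (Icc a b) :=
    hf.mul_continuousOn (continuous_pow n).continuousOn isCompact_Icc
  simp_rw [eval_eq_sum_range, Finset.mul_sum, mul_left_comm (f _)]
  rw [integral_finsetSum _ fun n _ => (hint n).const_mul _]
  simp [integral_const_mul, hmom]

theorem integral_mul_eq_zero_of_moments (hf : IntegrableOn f (Icc a b))
    (hmom : ∀ n : ℕ, ∫ x in Icc a b, f x * x ^ n = 0) {g : ℝ → ℝ}
    (hg : ContinuousOn g (Icc a b)) : ∫ x in Icc a b, f x * g x = 0 := by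
  set K := ∫ x in Icc a b, ‖f x‖
  have hK : 0 ≤ K := integral_nonneg fun _ => norm_nonneg _
  refine abs_nonpos_iff.1 (le_of_forall_pos_le_add fun ε hε => ?_)
  have hδ : 0 < ε / (K + 1) := by positivity
  obtain ⟨p, hp⟩ := exists_polynomial_near_of_continuousOn a b g hg _ hδ
  have hpc : ContinuousOn (fun x => p.eval x) (Icc a b) := p.continuous.continuousOn
  have hsub : ∫ x in Icc a b, f x * g x = ∫ x in Icc a b, f x * (g x - p.eval x) := by
    simp_rw [mul_sub]
    rw [integral_sub (hf.mul_continuousOn hg isCompact_Icc) (hf.mul_continuousOn hpc isCompact_Icc),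
      integral_mul_eval_eq_zero_of_moments hf hmom, sub_zero]
  calc |∫ x in Icc a b, f x * g x|
      ≤ ∫ x in Icc a b, ε / (K + 1) * ‖f x‖ := by
        rw [hsub, ← Real.norm_eq_abs]
        refine norm_integral_le_of_norm_le (hf.norm.const_mul _) ?_
        filter_upwards [ae_restrict_mem measurableSet_Icc] with x hx
        rw [norm_mul, mul_comm, Real.norm_eq_abs, abs_sub_comm]
        exact mul_le_mul_of_nonneg_right (hp x hx).le (norm_nonneg _)
    _ = ε / (K + 1) * K := integral_const_mul _ _
    _ ≤ 0 + ε := by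
        rw [zero_add, div_mul_eq_mul_div, div_le_iff₀ (by positivity)]
        nlinarith

theorem ae_eq_zero_of_moments (hf : IntegrableOn f (Icc a b))
    (hmom : ∀ n : ℕ, ∫ x in Icc a b, f x * x ^ n = 0) :
    ∀ᵐ x ∂volume.restrict (Icc a b), f x = 0 :=
  ae_eq_zero_of_integral_contDiff_smul_eq_zero hf.locallyIntegrable fun g hg _ => by
    simpa only [smul_eq_mul, mul_comm (g _)] using
      integral_mul_eq_zero_of_moments hf hmom hg.continuous.continuousOn

end Moments

theorem frequently_nhdsLT_of_ae_restrict_Ioo {μ : Measure ℝ} [μ.IsOpenPosMeasure] {p : ℝ → Prop}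
    {a t : ℝ} (hat : a < t) (h : ∀ᵐ x ∂μ.restrict (Ioo a t), p x) : ∃ᶠ x in 𝓝[<] t, p x := by
  intro hnot
  obtain ⟨c, hct, hc⟩ := mem_nhdsLT_iff_exists_Ioo_subset.1 hnot
  rw [ae_restrict_iff' measurableSet_Ioo] at h
  refine isOpen_Ioo.measure_ne_zero μ (nonempty_Ioo.2 (max_lt hat hct)) (measure_mono_null ?_ h)
  exact fun x hx hpx => hc ⟨(le_max_right a c).trans_lt hx.1, hx.2⟩
    (hpx ⟨(le_max_left a c).trans_lt hx.1, hx.2⟩)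

/-- If `f : [0,1] → ℝ` is càglàd (left-continuous on `(0,1]` with right limits on `[0,1)`),
`f 0 = 0` and all moments `∫₀¹ f(s) sⁿ ds` vanish, then `f` vanishes identically on `[0,1]`. -/
theorem caglad_annulment (f : ℝ → ℝ)
    (hleft : ∀ t ∈ Set.Ioc (0 : ℝ) 1,
      Tendsto f (nhdsWithin t (Set.Iio t)) (nhds (f t)))
    (hright : ∀ t ∈ Set.Ico (0 : ℝ) 1,
      ∃ L : ℝ, Tendsto f (nhdsWithin t (Set.Ioi t)) (nhds L))
    (h0 : f 0 = 0)
    (hmom : ∀ n : ℕ, ∫ s in Set.Icc (0 : ℝ) 1, f s * s ^ n = 0) :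
    ∀ s ∈ Set.Icc (0 : ℝ) 1, f s = 0 := by
  have hmeas : AEMeasurable f (volume.restrict (Icc 0 1)) := by
    refine aemeasurable_of_ae_tendsto_nhdsLT ?_
    rw [← Measure.restrict_congr_set Ioc_ae_eq_Icc]
    filter_upwards [ae_restrict_mem measurableSet_Ioc] using hleft
  obtain ⟨C, hC⟩ := isCompact_Icc.bddAbove_image_of_isBoundedUnder fun t ht =>
    isBoundedUnder_norm_nhdsWithin_Icc (fun t ht => ⟨f t, hleft t ht⟩) hright ht
  have hint : IntegrableOn f (Icc 0 1) := by
    refine .of_bound measure_Icc_lt_top hmeas.aestronglyMeasurable C ?_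
    filter_upwards [ae_restrict_mem measurableSet_Icc] with t ht using hC (mem_image_of_mem _ ht)
  have hae := ae_eq_zero_of_moments hint hmom
  rintro t ⟨ht0, ht1⟩
  rcases ht0.eq_or_lt with rfl | ht0
  · exact h0
  refine tendsto_nhds_unique_of_frequently_eq (hleft t ⟨ht0, ht1⟩) tendsto_const_nhds ?_
  exact frequently_nhdsLT_of_ae_restrict_Ioo ht0 (ae_restrict_of_ae_restrict_of_subset
    (Ioo_subset_Icc_self.trans (Icc_subset_Icc_right ht1)) hae)
end

section
/- Let F be a σ-finite Borel measure on ℝ with F({0}) = 0, ∫_ℝ min(1, x²) dF(x) < ∞, and ∫_ℝ |x|^k dF(x) < ∞ for all integers k ≥ 2. Let g : ℝ → ℝ be Borel measurable with ∫_ℝ (e^{g(x)} − 1)² dF(x) < ∞. Then the measure F̃ defined by F̃(dx) := e^{g(x)} F(dx) satisfies: (i) F̃({0}) = 0; (ii) ∫_ℝ min(1, x²) dF̃(x) < ∞, i.e. F̃ is a Lévy measure on ℝ; and (iii) ∫_{|x|>1} |x|^k dF̃(x) < ∞ for every natural number k. -/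
/-!
Pointwise `e^g h = h + (e^g - 1) h ≤ h + ((e^g - 1)² + h²) / 2`, so `∫ h d(e^g F)` is controlled by
`∫ (e^g - 1)² dF` and by `∫ b dF` for any `b ≥ max h h²`. For `h = min 1 x²` take `b = h`, the
Lévy integral of `F`; for `h = |x|^k` on `{1 < |x|}` take `b = |x|^(2k+2)`, a moment of `F`.
-/

open MeasureTheory

lemma mul_le_two_mul_add_sub_one_sq {s h b : ℝ} (h0 : 0 ≤ h) (hb : h ≤ b) (hb2 : h ^ 2 ≤ b) :
    s * h ≤ 2 * b + (s - 1) ^ 2 := by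
  nlinarith [sq_nonneg (h - (s - 1))]

lemma ENNReal.ofReal_mul_le_two_mul_add_sub_one_sq {s h b : ℝ} (h0 : 0 ≤ h) (hb : h ≤ b)
    (hb2 : h ^ 2 ≤ b) :
    ENNReal.ofReal s * ENNReal.ofReal h ≤ 2 * ENNReal.ofReal b + ENNReal.ofReal ((s - 1) ^ 2) := by
  rw [← ENNReal.ofReal_mul' h0, ← ENNReal.ofReal_ofNat 2, ← ENNReal.ofReal_mul zero_le_two,
    ← ENNReal.ofReal_add (by linarith [sq_nonneg h]) (sq_nonneg _)]
  exact ENNReal.ofReal_le_ofReal (mul_le_two_mul_add_sub_one_sq h0 hb hb2)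

theorem lintegral_withDensity_ofReal_lt_top {α : Type*} [MeasurableSpace α] {μ : Measure α}
    {ρ f b : α → ℝ} (hρ : Measurable ρ)
    (hρ_sq : ∫⁻ x, ENNReal.ofReal ((ρ x - 1) ^ 2) ∂μ < ⊤)
    (hb : ∫⁻ x, ENNReal.ofReal (b x) ∂μ < ⊤)
    (hfb : ∀ᵐ x ∂μ, 0 ≤ f x ∧ f x ≤ b x ∧ f x ^ 2 ≤ b x) :
    ∫⁻ x, ENNReal.ofReal (f x) ∂μ.withDensity (fun x => ENNReal.ofReal (ρ x)) < ⊤ :=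
  calc _ ≤ ∫⁻ x, ENNReal.ofReal (ρ x) * ENNReal.ofReal (f x) ∂μ :=
        lintegral_withDensity_le_lintegral_mul _ hρ.ennreal_ofReal _
    _ ≤ ∫⁻ x, 2 * ENNReal.ofReal (b x) + ENNReal.ofReal ((ρ x - 1) ^ 2) ∂μ := by
        refine lintegral_mono_ae ?_
        filter_upwards [hfb] with x ⟨h0, h1, h2⟩
        exact ENNReal.ofReal_mul_le_two_mul_add_sub_one_sq h0 h1 h2
    _ = 2 * ∫⁻ x, ENNReal.ofReal (b x) ∂μ + ∫⁻ x, ENNReal.ofReal ((ρ x - 1) ^ 2) ∂μ := by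
        rw [lintegral_add_right _ (by fun_prop), lintegral_const_mul' _ _ ENNReal.ofNat_ne_top]
    _ < ⊤ := ENNReal.add_lt_top.2 ⟨ENNReal.mul_lt_top ENNReal.ofNat_lt_top hb, hρ_sq⟩

theorem exponential_tilting_levy_general (F : Measure ℝ)
    (hF0 : F {0} = 0)
    (hF2 : ∫⁻ x, ENNReal.ofReal (min 1 (x ^ 2)) ∂F < ⊤)
    (hFk : ∀ k : ℕ, 2 ≤ k → ∫⁻ x, ENNReal.ofReal (|x| ^ k) ∂F < ⊤)
    (g : ℝ → ℝ) (hg : Measurable g)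
    (hsq : ∫⁻ x, ENNReal.ofReal ((Real.exp (g x) - 1) ^ 2) ∂F < ⊤) :
    (F.withDensity (fun x => ENNReal.ofReal (Real.exp (g x)))) {0} = 0 ∧
      (∫⁻ x, ENNReal.ofReal (min 1 (x ^ 2))
        ∂(F.withDensity fun x => ENNReal.ofReal (Real.exp (g x))) < ⊤) ∧
      (∀ k : ℕ,
        ∫⁻ x in {x : ℝ | 1 < |x|}, ENNReal.ofReal (|x| ^ k)
          ∂(F.withDensity fun x => ENNReal.ofReal (Real.exp (g x))) < ⊤) := by
  have hρ : Measurable fun x => Real.exp (g x) := by fun_prop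
  refine ⟨withDensity_absolutelyContinuous F _ hF0, ?_, fun k => ?_⟩
  · refine lintegral_withDensity_ofReal_lt_top hρ hsq hF2 (ae_of_all _ fun x => ?_)
    have h0 : 0 ≤ min 1 (x ^ 2) := by positivity
    exact ⟨h0, le_rfl, pow_le_of_le_one h0 (min_le_left _ _) two_ne_zero⟩
  · have hS : MeasurableSet {x : ℝ | 1 < |x|} := measurableSet_lt measurable_const measurable_abs
    rw [restrict_withDensity hS]
    refine lintegral_withDensity_ofReal_lt_top hρ ((setLIntegral_le_lintegral _ _).trans_lt hsq)
      ((setLIntegral_le_lintegral _ _).trans_lt (hFk (2 * k + 2) (by omega))) ?_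
    filter_upwards [ae_restrict_mem hS] with x hx
    have hx1 : 1 ≤ |x| := le_of_lt hx
    refine ⟨by positivity, pow_le_pow_right₀ hx1 (by omega), ?_⟩
    rw [← pow_mul]
    exact pow_le_pow_right₀ hx1 (by omega)

/-- Exponential tilting of a Lévy measure: if `F` is a Lévy measure on `ℝ` with all moments
of order `≥ 2` finite and `∫ (e^{g} − 1)² dF < ∞`, then `e^{g}·F` is again a Lévy measure
with all moments finite outside the unit ball. -/
theorem exponential_tilting_levy (F : Measure ℝ) [SigmaFinite F]
    (hF0 : F {0} = 0)
    (hF2 : ∫⁻ x, ENNReal.ofReal (min 1 (x ^ 2)) ∂F < ⊤)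
    (hFk : ∀ k : ℕ, 2 ≤ k → ∫⁻ x, ENNReal.ofReal (|x| ^ k) ∂F < ⊤)
    (g : ℝ → ℝ) (hg : Measurable g)
    (hsq : ∫⁻ x, ENNReal.ofReal ((Real.exp (g x) - 1) ^ 2) ∂F < ⊤) :
    (F.withDensity (fun x => ENNReal.ofReal (Real.exp (g x)))) {0} = 0 ∧
      (∫⁻ x, ENNReal.ofReal (min 1 (x ^ 2))
        ∂(F.withDensity fun x => ENNReal.ofReal (Real.exp (g x))) < ⊤) ∧
      (∀ k : ℕ,
        ∫⁻ x in {x : ℝ | 1 < |x|}, ENNReal.ofReal (|x| ^ k)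
          ∂(F.withDensity fun x => ENNReal.ofReal (Real.exp (g x))) < ⊤) :=
  exponential_tilting_levy_general F hF0 hF2 hFk g hg hsq
end
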